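/- arXiv:math/0409325 — 2 statements merged into one kernel-verified Lean document; each statement's English description precedes it below -/
import Mathlib

section
/- Let γ, σ, β be continuous real-valued functions on [t₀, ∞) and let μ ∈ C¹[t₀, ∞) be positive. Suppose 0 ≤ σ(t) ≤ (μ(t)/2)(γ(t) − μ'(t)/μ(t)), β(t) ≤ (1/(2μ(t)))(γ(t) − μ'(t)/μ(t)) for all t ≥ t₀, and g₀ μ(t₀) < 1. Then every nonnegative C¹ function g on [t₀, ∞) satisfying g'(t) ≤ −γ(t) g(t) + σ(t) g(t)² + β(t) and g(t₀) = g₀ satisfies 0 ≤ g(t) < 1/μ(t) for all t ≥ t₀. -/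
/-!
With `h = g μ` and `k = γ - μ'/μ`, the hypotheses on `σ` and `β` turn the Riccati inequality into
`h' ≤ (k/2) (h - 1)²`. So `f = h - 1` starts negative and satisfies `f' ≤ K f²` on every compact
interval, where `K` bounds the continuous function `k/2`; such an `f` stays below the barrier
`f(t₀) exp (-C (t - t₀))` for a large enough `C`, and in particular never reaches `0`.
-/

open Set

theorem neg_of_hasDerivWithinAt_le_mul_sq {f f' : ℝ → ℝ} {a b K : ℝ}
    (hf : ContinuousOn f (Icc a b)) (hf' : ∀ x ∈ Ico a b, HasDerivWithinAt f (f' x) (Ici x) x)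
    (hbound : ∀ x ∈ Ico a b, f' x ≤ K * f x ^ 2) (ha : f a < 0) :
    ∀ x ∈ Icc a b, f x < 0 := by
  -- `|B| ≤ -f a`, so at a contact point `K B² ≤ |K| (-f a) |B| < C |B| = B'`.
  set C := |K| * -f a + 1
  set B : ℝ → ℝ := fun x => f a * Real.exp (-C * (x - a))
  have hB : ∀ x, HasDerivAt B (-C * B x) x := by
    intro x
    have h := (((hasDerivAt_id x).sub_const a).const_mul (-C)).exp.const_mul (f a)
    simp only [id, mul_one] at h
    exact h.congr_deriv (by simp only [B]; ring)
  have hB_neg : ∀ x, B x < 0 := fun x => mul_neg_of_neg_of_pos ha (Real.exp_pos _)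
  have hC : 0 < C := by have := abs_nonneg K; nlinarith
  have hB_ge : ∀ x ∈ Ico a b, f a ≤ B x := by
    intro x hx
    have hexp : Real.exp (-C * (x - a)) ≤ 1 :=
      Real.exp_le_one_iff.mpr (by nlinarith [sub_nonneg.mpr hx.1])
    nlinarith
  have hf_le_B : ∀ x ∈ Icc a b, f x ≤ B x := by
    refine image_le_of_deriv_right_lt_deriv_boundary' hf hf' (by simp [B])
      (fun x _ => (hB x).continuousAt.continuousWithinAt)
      (fun x _ => (hB x).hasDerivWithinAt) ?_
    intro x hx hfx
    have hBx := hB_neg x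
    calc f' x ≤ K * B x ^ 2 := hfx ▸ hbound x hx
      _ ≤ |K| * -B x * -B x := by nlinarith [le_abs_self K, sq_nonneg (B x)]
      _ ≤ |K| * -f a * -B x := by have := hB_ge x hx; gcongr; linarith
      _ < C * -B x := by nlinarith
      _ = -C * B x := by ring
  exact fun x hx => (hf_le_B x hx).trans_lt (hB_neg x)

theorem riccati_product_deriv_le {γ σ β μ μ' g g' : ℝ} (hμ : 0 < μ)
    (hσ : σ ≤ (μ / 2) * (γ - μ' / μ)) (hβ : β ≤ (1 / (2 * μ)) * (γ - μ' / μ))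
    (hg' : g' ≤ -γ * g + σ * g ^ 2 + β) :
    g' * μ + g * μ' ≤ (γ - μ' / μ) / 2 * (g * μ - 1) ^ 2 := by
  set k := γ - μ' / μ
  have hμ' : μ' = (γ - k) * μ := by simp only [k]; field_simp; ring
  have hβμ : β * μ ≤ k / 2 := by
    calc β * μ ≤ (1 / (2 * μ)) * k * μ := mul_le_mul_of_nonneg_right hβ hμ.le
      _ = k / 2 := by field_simp
  have hσμ : σ * (g ^ 2 * μ) ≤ (μ / 2) * k * (g ^ 2 * μ) :=
    mul_le_mul_of_nonneg_right hσ (by positivity)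
  calc g' * μ + g * μ' ≤ (-γ * g + σ * g ^ 2 + β) * μ + g * μ' := by gcongr
    _ = -k * (g * μ) + σ * (g ^ 2 * μ) + β * μ := by rw [hμ']; ring
    _ ≤ -k * (g * μ) + (μ / 2) * k * (g ^ 2 * μ) + k / 2 := by gcongr
    _ = k / 2 * (g * μ - 1) ^ 2 := by ring

theorem riccati_inequality_bound_general
    (t₀ g₀ : ℝ) (γ σ β μ μ' g g' : ℝ → ℝ)
    (hγ : ContinuousOn γ (Ici t₀))
    (hμ' : ∀ t ∈ Ici t₀, HasDerivWithinAt μ (μ' t) (Ici t₀) t)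
    (hμ'cont : ContinuousOn μ' (Ici t₀))
    (hμpos : ∀ t ∈ Ici t₀, 0 < μ t)
    (hσbound : ∀ t ∈ Ici t₀, 0 ≤ σ t ∧ σ t ≤ (μ t / 2) * (γ t - μ' t / μ t))
    (hβbound : ∀ t ∈ Ici t₀, β t ≤ (1 / (2 * μ t)) * (γ t - μ' t / μ t))
    (hinit : g₀ * μ t₀ < 1)
    (hgnonneg : ∀ t ∈ Ici t₀, 0 ≤ g t)
    (hg' : ∀ t ∈ Ici t₀, HasDerivWithinAt g (g' t) (Ici t₀) t)
    (hgineq : ∀ t ∈ Ici t₀, g' t ≤ -γ t * g t + σ t * (g t) ^ 2 + β t)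
    (hg0 : g t₀ = g₀) :
    ∀ t ∈ Ici t₀, 0 ≤ g t ∧ g t < 1 / μ t := by
  intro T hT
  refine ⟨hgnonneg T hT, (lt_div_iff₀ (hμpos T hT)).mpr ?_⟩
  have hIcc : Icc t₀ T ⊆ Ici t₀ := Icc_subset_Ici_self
  have hμc : ContinuousOn μ (Ici t₀) := fun t ht => (hμ' t ht).continuousWithinAt
  have hkc : ContinuousOn (fun t => (γ t - μ' t / μ t) / 2) (Icc t₀ T) :=
    ((hγ.sub (hμ'cont.div hμc fun t ht => (hμpos t ht).ne')).div_const 2).mono hIcc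
  obtain ⟨K, hK⟩ := isCompact_Icc.bddAbove_image hkc
  have hf' : ∀ t ∈ Ico t₀ T, HasDerivWithinAt (fun t => g t * μ t - 1)
      (g' t * μ t + g t * μ' t) (Ici t) t := fun t ht =>
    (((hg' t ht.1).mul (hμ' t ht.1)).sub_const 1).mono (Ici_subset_Ici.mpr ht.1)
  have hbound : ∀ t ∈ Ico t₀ T, g' t * μ t + g t * μ' t ≤ K * (g t * μ t - 1) ^ 2 := by
    intro t ht
    have ht' : t ∈ Ici t₀ := ht.1
    calc g' t * μ t + g t * μ' t ≤ (γ t - μ' t / μ t) / 2 * (g t * μ t - 1) ^ 2 :=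
          riccati_product_deriv_le (hμpos t ht') (hσbound t ht').2 (hβbound t ht') (hgineq t ht')
      _ ≤ K * (g t * μ t - 1) ^ 2 := by
          gcongr; exact hK ⟨t, Ico_subset_Icc_self ht, rfl⟩
  have hgc : ContinuousOn g (Ici t₀) := fun t ht => (hg' t ht).continuousWithinAt
  have hneg := neg_of_hasDerivWithinAt_le_mul_sq (f := fun t => g t * μ t - 1)
    (((hgc.mul hμc).sub continuousOn_const).mono hIcc) hf' hbound (by rw [hg0]; linarith)
  linarith [hneg T ⟨hT, le_rfl⟩]

theorem riccati_inequality_bound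
    (t₀ g₀ : ℝ) (γ σ β μ μ' g g' : ℝ → ℝ)
    (hγ : ContinuousOn γ (Ici t₀)) (hσ : ContinuousOn σ (Ici t₀))
    (hβ : ContinuousOn β (Ici t₀))
    (hμ' : ∀ t ∈ Ici t₀, HasDerivWithinAt μ (μ' t) (Ici t₀) t)
    (hμ'cont : ContinuousOn μ' (Ici t₀))
    (hμpos : ∀ t ∈ Ici t₀, 0 < μ t)
    (hσbound : ∀ t ∈ Ici t₀, 0 ≤ σ t ∧ σ t ≤ (μ t / 2) * (γ t - μ' t / μ t))
    (hβbound : ∀ t ∈ Ici t₀, β t ≤ (1 / (2 * μ t)) * (γ t - μ' t / μ t))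
    (hinit : g₀ * μ t₀ < 1)
    (hgnonneg : ∀ t ∈ Ici t₀, 0 ≤ g t)
    (hg' : ∀ t ∈ Ici t₀, HasDerivWithinAt g (g' t) (Ici t₀) t)
    (hgineq : ∀ t ∈ Ici t₀, g' t ≤ -γ t * g t + σ t * (g t) ^ 2 + β t)
    (hg0 : g t₀ = g₀) :
    ∀ t ∈ Ici t₀, 0 ≤ g t ∧ g t < 1 / μ t :=
  riccati_inequality_bound_general t₀ g₀ γ σ β μ μ' g g' hγ hμ' hμ'cont hμpos hσbound hβbound hinit
    hgnonneg hg' hgineq hg0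
end

section
/- Let g : [0,∞) → ℝ be nonnegative and differentiable, M > 0, r ≥ 0, and ε(t) = c₁(c₀+t)^{−b} with c₀, c₁ > 0, b ∈ (0,1), b/c₀ = 1/4, ε(0) = 4Mr, and g(0) ≤ r. If g'(t) ≤ −g(t) + (M/(2ε(t))) g(t)² + r |ε'(t)|/ε(t) for all t ≥ 0, then g(t) < ε(t)/(2M) for all t ≥ 0; in particular g(t) → 0 as t → ∞. -/
open Set Filter

theorem main_riccati_instantiation
    (M r c₀ c₁ b : ℝ) (hM : 0 < M) (hr : 0 ≤ r)
    (hc₀ : 0 < c₀) (hc₁ : 0 < c₁) (hb : 0 < b) (hb1 : b < 1)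
    (hbc : b / c₀ = 1 / 4)
    (ε : ℝ → ℝ) (hε : ∀ t, ε t = c₁ * (c₀ + t) ^ (-b))
    (hε0 : ε 0 = 4 * M * r)
    (g g' : ℝ → ℝ)
    (hgnonneg : ∀ t ≥ (0 : ℝ), 0 ≤ g t)
    (hg' : ∀ t ≥ (0 : ℝ), HasDerivWithinAt g (g' t) (Ici 0) t)
    (hg0 : g 0 ≤ r)
    (hineq : ∀ t ≥ (0 : ℝ),
      g' t ≤ -g t + (M / (2 * ε t)) * (g t) ^ 2 + r * |deriv ε t| / ε t) :
    (∀ t ≥ (0 : ℝ), g t < ε t / (2 * M)) ∧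
    Tendsto g atTop (nhds 0) := by
  have hE : ε = fun t => c₁ * (c₀ + t) ^ (-b) := funext hε
  have hεpos : ∀ t ≥ (0 : ℝ), 0 < ε t := by
    intro t ht
    rw [hε]
    have hpos : 0 < c₀ + t := by linarith
    positivity
  have hc4 : c₀ = 4 * b := by
    field_simp at hbc; linarith
  have hrpos : 0 < r := by
    have := hεpos 0 le_rfl
    nlinarith [hε0]
  -- derivative of ε
  have hεd : ∀ t ≥ (0 : ℝ), HasDerivAt ε (-(b * ε t / (c₀ + t))) t := by
    intro t ht
    have hpos : (0 : ℝ) < c₀ + t := by linarith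
    have h1 : HasDerivAt (fun x : ℝ => (c₀ + x) ^ (-b)) (-b * (c₀ + t) ^ (-b - 1) * 1) t := by
      exact (Real.hasDerivAt_rpow_const (p := -b) (Or.inl hpos.ne')).comp t
        ((hasDerivAt_id t).const_add c₀)
    have h2 := h1.const_mul c₁
    have h3 : HasDerivAt ε (c₁ * (-b * (c₀ + t) ^ (-b - 1) * 1)) t := by
      rw [hE]; exact h2
    have heq : c₁ * (-b * (c₀ + t) ^ (-b - 1) * 1) = -(b * ε t / (c₀ + t)) := by
      rw [hε]
      have h4 : (c₀ + t) ^ (-b - 1) = (c₀ + t) ^ (-b) / (c₀ + t) := by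
        rw [Real.rpow_sub hpos, Real.rpow_one]
      rw [h4]
      ring
    rw [heq] at h3
    exact h3
  have habs : ∀ t ≥ (0 : ℝ), |deriv ε t| = b * ε t / (c₀ + t) := by
    intro t ht
    have hpos : (0 : ℝ) < c₀ + t := by linarith
    rw [(hεd t ht).deriv, abs_neg, abs_of_nonneg]
    exact div_nonneg (mul_nonneg hb.le (hεpos t ht).le) hpos.le
  -- bound on the inhomogeneous term
  have hterm : ∀ t ≥ (0 : ℝ), r * |deriv ε t| / ε t ≤ ε t / (16 * M) := by
    intro t ht
    have hpos : (0 : ℝ) < c₀ + t := by linarith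
    have hEt := hεpos t ht
    rw [habs t ht]
    have h1 : r * (b * ε t / (c₀ + t)) / ε t = r * b / (c₀ + t) := by
      field_simp
    rw [h1]
    -- key: c₀^(1-b) ≤ (c₀+t)^(1-b)
    have hkey : c₀ * c₀ ^ (-b) ≤ (c₀ + t) * (c₀ + t) ^ (-b) := by
      have h2 : c₀ ^ (1 - b) ≤ (c₀ + t) ^ (1 - b) :=
        Real.rpow_le_rpow hc₀.le (by linarith) (by linarith)
      have e1 : c₀ ^ (1 - b) = c₀ * c₀ ^ (-b) := by
        rw [show (1:ℝ) - b = 1 + -b by ring, Real.rpow_add hc₀, Real.rpow_one]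
      have e2 : (c₀ + t) ^ (1 - b) = (c₀ + t) * (c₀ + t) ^ (-b) := by
        rw [show (1:ℝ) - b = 1 + -b by ring, Real.rpow_add hpos, Real.rpow_one]
      rw [e1, e2] at h2
      exact h2
    have hr4 : r = ε 0 / (4 * M) := by rw [hε0]; field_simp
    have hε0' : ε 0 = c₁ * c₀ ^ (-b) := by rw [hε]; norm_num
    rw [hr4, hε0', hε]
    rw [div_le_div_iff₀ hpos (by positivity)]
    have hid : c₁ * c₀ ^ (-b) / (4 * M) * b * (16 * M) = c₀ * (c₁ * c₀ ^ (-b)) := by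
      rw [hc4]; field_simp; ring
    rw [hid]
    nlinarith [mul_le_mul_of_nonneg_left hkey hc₁.le]
  -- the barrier argument on each [0, T]
  have hle : ∀ t ≥ (0 : ℝ), g t ≤ ε t / (4 * M) := by
    intro T hT
    have main : ∀ ⦃x⦄, x ∈ Icc (0:ℝ) T → g x ≤ ε x / (4 * M) := by
      refine image_le_of_deriv_right_lt_deriv_boundary'
        (f' := g') (B := fun t => ε t / (4 * M))
        (B' := fun t => -(b * ε t / (c₀ + t)) / (4 * M)) ?_ ?_ ?_ ?_ ?_ ?_
      · intro x hx
        exact ((hg' x hx.1).continuousWithinAt).mono fun y hy => hy.1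
      · intro x hx
        exact (hg' x hx.1).mono (Ici_subset_Ici.2 hx.1)
      · show g 0 ≤ ε 0 / (4 * M)
        rw [hε0]
        calc g 0 ≤ r := hg0
        _ = 4 * M * r / (4 * M) := by field_simp
      · intro x hx
        exact (((hεd x hx.1).continuousAt).continuousWithinAt).div_const _
      · intro x hx
        exact ((hεd x hx.1).div_const (4 * M)).hasDerivWithinAt
      · intro x hx hgx
        have hx0 : (0:ℝ) ≤ x := hx.1
        have hpos : (0 : ℝ) < c₀ + x := by linarith
        have hEx := hεpos x hx0
        have h1 := hineq x hx0
        have h2 := hterm x hx0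
        have h3 : M / (2 * ε x) * (ε x / (4 * M)) ^ 2 = ε x / (32 * M) := by
          field_simp; ring
        have h4 : b * ε x / (c₀ + x) ≤ ε x / 4 := by
          rw [div_le_div_iff₀ hpos (by norm_num)]
          nlinarith
        rw [hgx] at h1
        rw [h3] at h1
        have h5 : g' x ≤ -(ε x / (4 * M)) + ε x / (32 * M) + ε x / (16 * M) := by linarith
        have h6 : -(ε x / (4 * M)) + ε x / (32 * M) + ε x / (16 * M) = -(5 * ε x) / (32 * M) := by
          field_simp; ring
        have h7 : -(ε x / 4) / (4 * M) ≤ -(b * ε x / (c₀ + x)) / (4 * M) := by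
          rw [div_le_div_iff₀ (by positivity) (by positivity)]
          nlinarith [mul_le_mul_of_nonneg_right h4 (by positivity : (0:ℝ) ≤ 4 * M)]
      -- compare
        have h8 : -(5 * ε x) / (32 * M) < -(ε x / 4) / (4 * M) := by
          rw [div_lt_div_iff₀ (by positivity) (by positivity)]
          nlinarith
        linarith [h5.trans_eq h6]
    exact main ⟨hT, le_rfl⟩
  constructor
  · intro t ht
    have h1 := hle t ht
    have h2 : ε t / (4 * M) < ε t / (2 * M) := by
      have := hεpos t ht
      rw [div_lt_div_iff₀ (by positivity) (by positivity)]
      nlinarith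
    linarith
  · -- limit
    have htend : Tendsto (fun t => ε t / (4 * M)) atTop (nhds 0) := by
      rw [hE]
      have h1 : Tendsto (fun t : ℝ => (c₀ + t) ^ (-b)) atTop (nhds 0) :=
        (tendsto_rpow_neg_atTop hb).comp (tendsto_atTop_add_const_left atTop c₀ tendsto_id)
      have h2 := (h1.const_mul c₁).div_const (4 * M)
      simpa using h2
    apply tendsto_of_tendsto_of_tendsto_of_le_of_le' tendsto_const_nhds htend
    · filter_upwards [eventually_ge_atTop (0:ℝ)] with t ht using hgnonneg t ht
    · filter_upwards [eventually_ge_atTop (0:ℝ)] with t ht using hle t ht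
end
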